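/- If a* ∈ A ∩ C is a variational generalized Nash equilibrium, i.e. a* ∈ A ∩ C and ⟨M(a*), a − a*⟩ ≥ 0 for all a ∈ A ∩ C, and each local action set A^i is convex, then a* is a generalized Nash equilibrium: for every player i ∈ {1,…,N} and every b^i ∈ A^i such that the joint action (b^i, a*^{-i}) lies in C, one has J^i(a*) ≤ J^i(b^i, a*^{-i}). -/

import Mathlib

open scoped RealInnerProductSpace

/-- The joint action space of `N` players, player `i` acting in `ℝ^{d i}`. -/
abbrev JointSpace {N : ℕ} (d : Fin N → ℕ) : Type :=
  EuclideanSpace ℝ ((j : Fin N) × Fin (d j))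

/-- The block of coordinates of the joint action `a` belonging to player `i`. -/
def blockOf {N : ℕ} {d : Fin N → ℕ} (i : Fin N) (a : JointSpace d) :
    EuclideanSpace ℝ (Fin (d i)) :=
  WithLp.toLp 2 (fun k => a ⟨i, k⟩)

/-- The joint action obtained from `a` by replacing player `i`'s block with `b`
(all other players keep their actions `a^{-i}`). -/
def updBlock {N : ℕ} {d : Fin N → ℕ} (i : Fin N) (a : JointSpace d)
    (b : EuclideanSpace ℝ (Fin (d i))) : JointSpace d :=
  WithLp.toLp 2 (fun jk => if h : jk.1 = i then b (Fin.cast (congrArg d h) jk.2) else a jk)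

/-- Matrix-vector multiplication, viewed as a map between Euclidean spaces. -/
noncomputable def mulVecJ {n : ℕ} {N : ℕ} {d : Fin N → ℕ}
    (K : Matrix (Fin n) ((j : Fin N) × Fin (d j)) ℝ) (x : JointSpace d) :
    EuclideanSpace ℝ (Fin n) :=
  (WithLp.equiv 2 _).symm (K.mulVec ((WithLp.equiv 2 _) x))

lemma updBlock_apply_same {N : ℕ} {d : Fin N → ℕ} (i : Fin N) (a : JointSpace d)
    (b : EuclideanSpace ℝ (Fin (d i))) (k : Fin (d i)) :
    updBlock i a b ⟨i, k⟩ = b k := by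
  simp [updBlock]

lemma updBlock_apply_ne {N : ℕ} {d : Fin N → ℕ} {i : Fin N} (a : JointSpace d)
    (b : EuclideanSpace ℝ (Fin (d i))) {jk : (j : Fin N) × Fin (d j)} (h : jk.1 ≠ i) :
    updBlock i a b jk = a jk := by
  simp [updBlock, h]

lemma updBlock_blockOf {N : ℕ} {d : Fin N → ℕ} (i : Fin N) (a : JointSpace d) :
    updBlock i a (blockOf i a) = a := by
  ext jk
  rcases jk with ⟨j, k⟩
  by_cases h : j = i
  · subst h; simp [updBlock, blockOf]
  · exact updBlock_apply_ne a _ h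

/-- The derivative applied to a vector supported on block `i` equals the inner product
with any `M` agreeing with the partial gradients on block `i`. -/
lemma fderiv_eq_inner {N : ℕ} {d : Fin N → ℕ} (f : JointSpace d → ℝ)
    (a : JointSpace d) (M : JointSpace d) (i : Fin N)
    (hM : ∀ k : Fin (d i), M ⟨i, k⟩ = fderiv ℝ f a (EuclideanSpace.single ⟨i, k⟩ (1 : ℝ)))
    (v : JointSpace d) (hv0 : ∀ jk : (j : Fin N) × Fin (d j), jk.1 ≠ i → v jk = 0) :
    fderiv ℝ f a v = ⟪M, v⟫ := by
  have hv : v = ∑ jk : (j : Fin N) × Fin (d j), v jk • EuclideanSpace.single jk (1 : ℝ) := by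
    refine ((EuclideanSpace.basisFun _ ℝ).sum_repr v).symm.trans ?_
    simp [EuclideanSpace.basisFun_apply, EuclideanSpace.basisFun_repr]
  conv_lhs => rw [hv]
  rw [map_sum, PiLp.inner_apply]
  refine Finset.sum_congr rfl fun jk _ => ?_
  rw [map_smul]
  by_cases h : jk.1 = i
  · rcases jk with ⟨j, k⟩
    dsimp only at h
    subst h
    rw [← hM k]
    simp [RCLike.inner_apply, mul_comm]
  · rw [hv0 jk h]
    simp

/-- a variational generalized Nash equilibrium is a generalized Nash
equilibrium: if `a* ∈ A ∩ C` satisfies `⟨M(a*), a − a*⟩ ≥ 0` for all `a ∈ A ∩ C`, with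
`M` the pseudo-gradient (`i`-th block the partial gradient of `J^i` in player `i`'s
variable), each `J^i` continuously differentiable and convex in its own variable, and
each `A^i` convex, then for every player `i` and every `b ∈ A^i` with
`(b, a*^{-i}) ∈ C` one has `J^i(a*) ≤ J^i(b, a*^{-i})`. -/
theorem stmt_0 (N n : ℕ) (d : Fin N → ℕ)
    (A : ∀ i : Fin N, Set (EuclideanSpace ℝ (Fin (d i))))
    (hAconv : ∀ i, Convex ℝ (A i))
    (K : Matrix (Fin n) ((j : Fin N) × Fin (d j)) ℝ) (l : EuclideanSpace ℝ (Fin n))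
    (J : Fin N → JointSpace d → ℝ)
    (hJdiff : ∀ i, ContDiff ℝ 1 (J i))
    (hJconv : ∀ (i : Fin N) (a : JointSpace d),
      ConvexOn ℝ Set.univ (fun b : EuclideanSpace ℝ (Fin (d i)) => J i (updBlock i a b)))
    (M : JointSpace d → JointSpace d)
    (hM : ∀ (a : JointSpace d) (i : Fin N) (k : Fin (d i)),
      M a ⟨i, k⟩ = fderiv ℝ (J i) a (EuclideanSpace.single ⟨i, k⟩ (1 : ℝ)))
    (astar : JointSpace d)
    (hastarA : ∀ i, blockOf i astar ∈ A i)
    (hastarC : ∀ j, mulVecJ K astar j ≤ l j)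
    (hVI : ∀ a : JointSpace d, (∀ i, blockOf i a ∈ A i) → (∀ j, mulVecJ K a j ≤ l j) →
      0 ≤ ⟪M astar, a - astar⟫) :
    ∀ i : Fin N, ∀ b ∈ A i, (∀ j, mulVecJ K (updBlock i astar b) j ≤ l j) →
      J i astar ≤ J i (updBlock i astar b) := by
  intro i b hbA hbC
  set y : JointSpace d := updBlock i astar b with hy
  -- y is in A ∩ C
  have hblock_i : blockOf i y = b := by
    ext k; exact updBlock_apply_same i astar b k
  have hblock_ne : ∀ jk : (j : Fin N) × Fin (d j), jk.1 ≠ i → y jk = astar jk :=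
    fun jk h => updBlock_apply_ne astar b h
  have hyA : ∀ j, blockOf j y ∈ A j := by
    intro j
    by_cases h : j = i
    · subst h; rw [hblock_i]; exact hbA
    · have : blockOf j y = blockOf j astar := by
        ext k; exact hblock_ne ⟨j, k⟩ h
      rw [this]; exact hastarA j
  have hVIy : 0 ≤ ⟪M astar, y - astar⟫ := hVI y hyA hbC
  -- the 1-D path
  set x : EuclideanSpace ℝ (Fin (d i)) := blockOf i astar with hx
  have hupd : ∀ t : ℝ, updBlock i astar (x + t • (b - x)) = astar + t • (y - astar) := by
    intro t
    ext jk
    rcases jk with ⟨j, k⟩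
    by_cases h : j = i
    · subst h
      rw [updBlock_apply_same]
      have h1 : y ⟨_, k⟩ = b k := updBlock_apply_same _ astar b k
      simp [PiLp.add_apply, PiLp.smul_apply, PiLp.sub_apply, h1, hx, blockOf, smul_eq_mul]
    · rw [updBlock_apply_ne _ _ h]
      have h1 : y ⟨j, k⟩ = astar ⟨j, k⟩ := hblock_ne ⟨j, k⟩ h
      simp [PiLp.add_apply, PiLp.smul_apply, PiLp.sub_apply, h1]
  set φ : ℝ → ℝ := fun t => J i (astar + t • (y - astar)) with hφ
  -- φ is convex on ℝ
  have hφconv : ConvexOn ℝ Set.univ φ := by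
    have hline : ConvexOn ℝ (⇑(AffineMap.lineMap x b) ⁻¹' (Set.univ : Set (EuclideanSpace ℝ (Fin (d i)))))
        ((fun c => J i (updBlock i astar c)) ∘ ⇑(AffineMap.lineMap x b)) :=
      (hJconv i astar).comp_affineMap (AffineMap.lineMap x b)
    have : ((fun c => J i (updBlock i astar c)) ∘ ⇑(AffineMap.lineMap x b)) = φ := by
      funext t
      simp only [Function.comp_apply, AffineMap.lineMap_apply_module]
      rw [hφ]
      have hmod : (1 - t) • x + t • b = x + t • (b - x) := by module
      rw [hmod, hupd t]
    rw [this] at hline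
    simpa using hline
  -- φ has derivative ⟪M astar, y - astar⟫ at 0
  have hψ : HasDerivAt (fun t : ℝ => astar + t • (y - astar)) (y - astar) 0 := by
    have := ((hasDerivAt_id (0 : ℝ)).smul_const (y - astar)).const_add astar
    simpa using this
  have hJd : HasFDerivAt (J i) (fderiv ℝ (J i) astar) astar :=
    ((hJdiff i).differentiable one_ne_zero).differentiableAt.hasFDerivAt
  have hφd : HasDerivAt φ (⟪M astar, y - astar⟫) 0 := by
    have hJd0 : HasFDerivAt (J i) (fderiv ℝ (J i) astar) (astar + (0 : ℝ) • (y - astar)) := by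
      simpa using hJd
    have hcomp := hJd0.comp_hasDerivAt 0 hψ
    have heq : fderiv ℝ (J i) astar (y - astar) = ⟪M astar, y - astar⟫ := by
      refine fderiv_eq_inner (J i) astar (M astar) i (hM astar i) (y - astar) ?_
      intro jk h
      have := hblock_ne jk h
      simp [PiLp.sub_apply, this]
    rw [hφ]
    rw [heq] at hcomp
    exact hcomp
  -- conclude
  have hslope := hφconv.le_slope_of_hasDerivAt (Set.mem_univ 0) (Set.mem_univ 1)
      one_pos hφd
  have hφ0 : φ 0 = J i astar := by simp [hφ]
  have hφ1 : φ 1 = J i y := by simp [hφ]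
  rw [slope_def_field, hφ0, hφ1] at hslope
  have : 0 ≤ (J i y - J i astar) / (1 - 0) := le_trans hVIy hslope
  have h10 : (1 : ℝ) - 0 = 1 := by norm_num
  rw [h10, div_one, sub_nonneg] at this
  exact this
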